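/- arXiv:2408.09981 — 5 statements merged into one kernel-verified Lean document; each statement's English description precedes it below -/
import Mathlib

section
/- Let d be a positive integer and let T : ℓ₂(ℤ^d) → ℓ₂(ℤ^d) be a bounded (continuous) linear operator that is shift-invariant, i.e. T{x[·−k₀]} = T{x}[·−k₀] for every x ∈ ℓ₂(ℤ^d) and every k₀ ∈ ℤ^d. Then there exists one and only one h ∈ ℓ₂(ℤ^d), namely the impulse response h = T{δ}, such that for every x ∈ ℓ₂(ℤ^d) and every k ∈ ℤ^d, T{x}[k] = ∑_{m∈ℤ^d} h[m] x[k−m], where the series converges absolutely. -/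
/-!
Write `δ_m` for the impulse at `m`. In `ℓ₂` every `x` is the norm-convergent sum `∑ x[m] δ_m`,
and shift invariance gives `T δ_m = h[· - m]` with `h = T δ`. Since `T` and evaluation at `k`
are continuous linear maps, `T x [k] = ∑ x[m] h[k - m]`, which is the convolution after the
substitution `m ↦ k - m`; it converges absolutely by Cauchy–Schwarz. Testing a representation
against `x = δ` recovers its kernel, whence uniqueness.
-/

open scoped ENNReal

theorem Memℓp.comp_equiv {α β E : Type*} [NormedAddCommGroup E] {f : α → E} {p : ℝ≥0∞}
    (hf : Memℓp f p) (e : β ≃ α) : Memℓp (f ∘ e) p := by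
  rcases p.trichotomy with rfl | rfl | hp
  · rw [memℓp_zero_iff] at hf ⊢
    exact hf.preimage e.injective.injOn
  · rw [memℓp_infty_iff] at hf ⊢
    rwa [show (Set.range fun b => ‖(f ∘ e) b‖) = _ from e.surjective.range_comp fun a => ‖f a‖]
  · rw [memℓp_gen_iff hp] at hf ⊢
    exact e.summable_iff.mpr hf

namespace lp

theorem summable_norm_mul_norm_sub {G E : Type*} [AddCommGroup G] [NormedAddCommGroup E]
    {p q : ℝ≥0∞} (hpq : p.toReal.HolderConjugate q.toReal)
    (f : lp (fun _ : G => E) p) (g : lp (fun _ : G => E) q) (k : G) :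
    Summable fun m => ‖f m‖ * ‖g (k - m)‖ :=
  lp.summable_mul hpq f ⟨_, (lp.memℓp g).comp_equiv (Equiv.subLeft k)⟩

theorem single_smul_one {α 𝕜 : Type*} [DecidableEq α] [NormedRing 𝕜] {p : ℝ≥0∞} (i : α) (c : 𝕜) :
    c • (lp.single p i 1 : lp (fun _ : α => 𝕜) p) = lp.single p i c := by
  rw [← lp.single_smul, smul_eq_mul, mul_one]

theorem tsum_mul_single_zero_sub {G 𝕜 : Type*} [AddCommGroup G] [DecidableEq G] [NormedRing 𝕜]
    {p : ℝ≥0∞} (h : G → 𝕜) (k : G) :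
    ∑' m, h m * (lp.single p 0 1 : lp (fun _ : G => 𝕜) p) (k - m) = h k := by
  rw [tsum_eq_single k fun m hm => ?_]
  · rw [sub_self, lp.single_apply_self, mul_one]
  · rw [lp.single_apply_ne p 0 _ (sub_ne_zero.mpr hm.symm), mul_zero]

section ShiftInvariant

variable {G 𝕜 : Type*} [AddCommGroup G] [DecidableEq G] [NormedField 𝕜] {p : ℝ≥0∞}

def ShiftInvariant (T : lp (fun _ : G => 𝕜) p → lp (fun _ : G => 𝕜) p) : Prop :=
  ∀ (x y : lp (fun _ : G => 𝕜) p) (k₀ : G), (∀ k, y k = x (k - k₀)) → ∀ k, T y k = T x (k - k₀)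

theorem ShiftInvariant.apply_single {T : lp (fun _ : G => 𝕜) p → lp (fun _ : G => 𝕜) p}
    (hT : ShiftInvariant T) (m k : G) :
    T (lp.single p m 1) k = T (lp.single p 0 1) (k - m) := by
  refine hT _ _ m (fun j => ?_) k
  by_cases hj : j = m
  · subst hj; simp
  · rw [lp.single_apply_ne p m _ hj, lp.single_apply_ne p 0 _ (sub_ne_zero.mpr hj)]

theorem ShiftInvariant.hasSum_apply [Fact (1 ≤ p)] (hp : p ≠ ∞)
    {T : lp (fun _ : G => 𝕜) p →L[𝕜] lp (fun _ : G => 𝕜) p} (hT : ShiftInvariant T)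
    (x : lp (fun _ : G => 𝕜) p) (k : G) :
    HasSum (fun m => T (lp.single p 0 1) m * x (k - m)) (T x k) := by
  have hexpand : HasSum (fun m => T (lp.single p m (x m)) k) (T x k) :=
    ((lp.evalCLM 𝕜 _ p k).comp T).hasSum (lp.hasSum_single hp x)
  have hterm (m : G) : T (lp.single p m (x m)) k = x m * T (lp.single p 0 1) (k - m) := by
    rw [← lp.single_smul_one, map_smul, lp.coeFn_smul, Pi.smul_apply, hT.apply_single,
      smul_eq_mul]
  rw [← (Equiv.subLeft k).hasSum_iff]
  convert hexpand using 1
  ext m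
  simp [hterm, mul_comm]

end ShiftInvariant

end lp

theorem kernel_theorem_scalar_general
    (d : ℕ)
    (T : lp (fun _ : Fin d → ℤ => ℝ) 2 →L[ℝ] lp (fun _ : Fin d → ℤ => ℝ) 2)
    (hshift : ∀ (x y : lp (fun _ : Fin d → ℤ => ℝ) 2) (k₀ : Fin d → ℤ),
      (∀ k : Fin d → ℤ, y k = x (k - k₀)) → ∀ k : Fin d → ℤ, T y k = T x (k - k₀)) :
    (∀ (x : lp (fun _ : Fin d → ℤ => ℝ) 2) (k : Fin d → ℤ),
      Summable (fun m : Fin d → ℤ => |T (lp.single 2 (0 : Fin d → ℤ) (1 : ℝ)) m * x (k - m)|) ∧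
      T x k = ∑' m : Fin d → ℤ, T (lp.single 2 (0 : Fin d → ℤ) (1 : ℝ)) m * x (k - m)) ∧
    (∀ h : lp (fun _ : Fin d → ℤ => ℝ) 2,
      (∀ (x : lp (fun _ : Fin d → ℤ => ℝ) 2) (k : Fin d → ℤ),
        T x k = ∑' m : Fin d → ℤ, h m * x (k - m)) →
      h = T (lp.single 2 (0 : Fin d → ℤ) (1 : ℝ))) := by
  have hT : lp.ShiftInvariant T := hshift
  have hconj : (2 : ℝ≥0∞).toReal.HolderConjugate (2 : ℝ≥0∞).toReal := by
    simpa using Real.HolderConjugate.two_two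
  refine ⟨fun x k => ⟨?_, (hT.hasSum_apply ENNReal.ofNat_ne_top x k).tsum_eq.symm⟩,
    fun h hh => lp.ext <| funext fun k => ?_⟩
  · simpa only [Real.norm_eq_abs, abs_mul] using
      lp.summable_norm_mul_norm_sub hconj (T (lp.single 2 0 1)) x k
  · rw [hh (lp.single 2 0 1) k, lp.tsum_mul_single_zero_sub]

/-- kernel theorem for discrete LSI operators on `ℓ₂(ℤ^d)`.
Let `T : ℓ₂(ℤ^d) → ℓ₂(ℤ^d)` be a bounded linear operator that is shift-invariant
(`T{x[·−k₀]} = T{x}[·−k₀]` for all `x` and `k₀`). Then there is one and only one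
`h ∈ ℓ₂(ℤ^d)`, namely the impulse response `h = T{δ}`, such that for every `x` and `k`,
`T{x}[k] = ∑_{m} h[m] x[k−m]`, the series converging absolutely. -/
theorem kernel_theorem_scalar
    (d : ℕ) (hd : 0 < d)
    (T : lp (fun _ : Fin d → ℤ => ℝ) 2 →L[ℝ] lp (fun _ : Fin d → ℤ => ℝ) 2)
    (hshift : ∀ (x y : lp (fun _ : Fin d → ℤ => ℝ) 2) (k₀ : Fin d → ℤ),
      (∀ k : Fin d → ℤ, y k = x (k - k₀)) → ∀ k : Fin d → ℤ, T y k = T x (k - k₀)) :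
    (∀ (x : lp (fun _ : Fin d → ℤ => ℝ) 2) (k : Fin d → ℤ),
      Summable (fun m : Fin d → ℤ => |T (lp.single 2 (0 : Fin d → ℤ) (1 : ℝ)) m * x (k - m)|) ∧
      T x k = ∑' m : Fin d → ℤ, T (lp.single 2 (0 : Fin d → ℤ) (1 : ℝ)) m * x (k - m)) ∧
    (∀ h : lp (fun _ : Fin d → ℤ => ℝ) 2,
      (∀ (x : lp (fun _ : Fin d → ℤ => ℝ) 2) (k : Fin d → ℤ),
        T x k = ∑' m : Fin d → ℤ, h m * x (k - m)) →
      h = T (lp.single 2 (0 : Fin d → ℤ) (1 : ℝ))) :=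
  kernel_theorem_scalar_general d T hshift
end

section
/- Let d be a positive integer and let h : ℤ^d → ℝ be finitely supported (an FIR filter). Then the convolution operator T_h : ℓ₂(ℤ^d) → ℓ₂(ℤ^d), x ↦ h ∗ x, is an isometry — equivalently, ∑_{m∈ℤ^d} h[m] h[m+k] = δ[k] for all k ∈ ℤ^d — if and only if there exist k₀ ∈ ℤ^d and a sign ε ∈ {+1, −1} such that h = ε δ[·−k₀]; in other words, the only scalar FIR Parseval filters are T_h = ± S^{k₀}, where S^{k₀} : x[·] ↦ x[·−k₀] is the shift operator. -/
/-! The response of a convolution isometry to an impulse `δᵢ` is the translate `h (· - i)`, and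
its response to `δ₀ + δ₋ₖ` is the sum of the two translates; polarization then gives
`∑ₘ h m * h (m + k) = ⟪δ₀, δ₋ₖ⟫ = δ[k]`. Conversely, order `ℤ^d` lexicographically: if `a ≤ b`
are the extreme points of the support of `h`, the autocorrelation at `b - a` reduces to the
single term `h a * h b ≠ 0`, so `a = b` and `h = ε δ[· - a]` with `ε² = 1`. -/

open scoped InnerProductSpace ENNReal

theorem real_inner_eq_of_norm_eq {E F : Type*} [NormedAddCommGroup E] [InnerProductSpace ℝ E]
    [NormedAddCommGroup F] [InnerProductSpace ℝ F] {x y : E} {u v : F}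
    (hx : ‖u‖ = ‖x‖) (hy : ‖v‖ = ‖y‖) (hxy : ‖u + v‖ = ‖x + y‖) : ⟪u, v⟫_ℝ = ⟪x, y⟫_ℝ := by
  rw [real_inner_eq_norm_add_mul_self_sub_norm_mul_self_sub_norm_mul_self_div_two,
    real_inner_eq_norm_add_mul_self_sub_norm_mul_self_sub_norm_mul_self_div_two, hx, hy, hxy]

variable {G : Type*} [AddCommGroup G]

def IsConvolutionIsometry (h : G → ℝ) : Prop :=
  ∀ x : lp (fun _ : G => ℝ) 2, ∃ u : lp (fun _ : G => ℝ) 2,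
    (∀ k : G, u k = ∑' m : G, h m * x (k - m)) ∧ ‖u‖ = ‖x‖

theorem hasSum_mul_single_sub [DecidableEq G] (h : G → ℝ) (i k : G) :
    HasSum (fun m => h m * (lp.single 2 i 1 : lp (fun _ : G => ℝ) 2) (k - m)) (h (k - i)) := by
  convert hasSum_pi_single (k - i) (h (k - i)) using 1
  ext m
  rcases eq_or_ne m (k - i) with rfl | hm
  · simp
  · rw [Pi.single_eq_of_ne hm, lp.single_apply, Pi.single_eq_of_ne, mul_zero]
    rintro rfl
    exact hm (sub_sub_cancel k m).symm

theorem IsConvolutionIsometry.tsum_mul_add [DecidableEq G] {h : G → ℝ}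
    (hT : IsConvolutionIsometry h) (k : G) :
    ∑' m, h m * h (m + k) = if k = 0 then 1 else 0 := by
  obtain ⟨u, hu, hu_norm⟩ := hT (lp.single 2 0 1)
  obtain ⟨v, hv, hv_norm⟩ := hT (lp.single 2 (-k) 1)
  obtain ⟨w, hw, hw_norm⟩ := hT (lp.single 2 0 1 + lp.single 2 (-k) 1)
  have hu' (j : G) : u j = h j := by
    rw [hu, (hasSum_mul_single_sub h 0 j).tsum_eq, sub_zero]
  have hv' (j : G) : v j = h (j + k) := by
    rw [hv, (hasSum_mul_single_sub h (-k) j).tsum_eq, sub_neg_eq_add]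
  have hwuv : w = u + v := by
    ext j
    simp only [hw, lp.coeFn_add, Pi.add_apply, mul_add, hu', hv']
    rw [((hasSum_mul_single_sub h 0 j).add (hasSum_mul_single_sub h (-k) j)).tsum_eq, sub_zero,
      sub_neg_eq_add]
  calc ∑' m, h m * h (m + k) = ⟪u, v⟫_ℝ := by
        simp only [lp.inner_eq_tsum, hu', hv', Real.inner_apply]
    _ = ⟪(lp.single 2 0 1 : lp (fun _ : G => ℝ) 2), lp.single 2 (-k) 1⟫_ℝ :=
        real_inner_eq_of_norm_eq hu_norm hv_norm (hwuv ▸ hw_norm)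
    _ = if k = 0 then 1 else 0 := by
        rw [lp.inner_single_left, lp.single_apply, Pi.single_apply, Real.inner_apply, one_mul]
        simp only [zero_eq_neg]

theorem lp.exists_comp_equiv {α β E : Type*} [NormedAddCommGroup E] {p : ℝ≥0∞}
    (hp : 0 < p.toReal) (x : lp (fun _ : α => E) p) (σ : β ≃ α) :
    ∃ y : lp (fun _ : β => E) p, ⇑y = ⇑x ∘ σ ∧ ‖y‖ = ‖x‖ := by
  have hmem : Memℓp (⇑x ∘ σ) p :=
    (memℓp_gen_iff hp).2 (σ.summable_iff.2 ((memℓp_gen_iff hp).1 x.2))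
  refine ⟨⟨_, hmem⟩, rfl, ?_⟩
  rw [lp.norm_eq_tsum_rpow hp, lp.norm_eq_tsum_rpow hp]
  exact congrArg (· ^ (1 / p.toReal)) (σ.tsum_eq fun i => ‖x i‖ ^ p.toReal)

theorem isConvolutionIsometry_single [DecidableEq G] (k₀ : G) {ε : ℝ} (hε : |ε| = 1) :
    IsConvolutionIsometry (Pi.single k₀ ε) := by
  intro x
  obtain ⟨y, hy, hy_norm⟩ := lp.exists_comp_equiv (by norm_num) x (Equiv.subRight k₀)
  refine ⟨ε • y, fun k => ?_, ?_⟩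
  · rw [tsum_eq_single k₀ fun m hm => by rw [Pi.single_eq_of_ne hm, zero_mul]]
    simp [hy]
  · rw [lp.norm_const_smul two_ne_zero, Real.norm_eq_abs, hε, one_mul, hy_norm]

section LinearOrder

variable [LinearOrder G] [IsOrderedAddMonoid G]

theorem Finset.sum_mul_add_max'_sub_min' {R : Type*} [NonUnitalNonAssocSemiring R] {s : Finset G}
    (hs : s.Nonempty) {h : G → R} (hsupp : ∀ m ∉ s, h m = 0) :
    ∑ m ∈ s, h m * h (m + (s.max' hs - s.min' hs)) = h (s.min' hs) * h (s.max' hs) := by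
  rw [Finset.sum_eq_single_of_mem _ (s.min'_mem hs), add_sub_cancel]
  intro m hm hm_ne
  have hlt : s.max' hs < m + (s.max' hs - s.min' hs) := by
    rw [← sub_lt_iff_lt_add, sub_sub_cancel]
    exact (s.min'_le m hm).lt_of_ne' hm_ne
  rw [hsupp _ fun hmem => not_le.2 hlt (s.le_max' _ hmem), mul_zero]

theorem exists_eq_single_of_tsum_mul_add [DecidableEq G] {h : G → ℝ} (hfin : h.support.Finite)
    (hc : ∀ k, ∑' m, h m * h (m + k) = if k = 0 then 1 else 0) :
    ∃ k₀ ε, |ε| = 1 ∧ h = Pi.single k₀ ε := by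
  set s := hfin.toFinset
  have hsupp (m : G) (hm : m ∉ s) : h m = 0 := by simpa [s] using hm
  have hc_sum (k : G) : ∑ m ∈ s, h m * h (m + k) = if k = 0 then 1 else 0 := by
    rw [← hc, tsum_eq_sum fun m hm => by rw [hsupp m hm, zero_mul]]
  have hs : s.Nonempty := by
    by_contra hs
    simpa [Finset.not_nonempty_iff_eq_empty.1 hs] using hc_sum 0
  have hne (m : G) (hm : m ∈ s) : h m ≠ 0 := by simpa [s] using hm
  have hmin_max : s.min' hs = s.max' hs := by
    by_contra hspread
    have := hc_sum (s.max' hs - s.min' hs)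
    rw [Finset.sum_mul_add_max'_sub_min' hs hsupp, if_neg (sub_ne_zero.2 (Ne.symm hspread))] at this
    exact mul_ne_zero (hne _ (s.min'_mem hs)) (hne _ (s.max'_mem hs)) this
  have hs_eq : s = {s.max' hs} := Finset.eq_singleton_iff_unique_mem.2
    ⟨s.max'_mem hs, fun m hm => le_antisymm (s.le_max' m hm) (hmin_max ▸ s.min'_le m hm)⟩
  refine ⟨s.max' hs, h (s.max' hs), ?_, funext fun m => ?_⟩
  · have := hc_sum 0
    rw [hs_eq, Finset.sum_singleton, add_zero, if_pos rfl] at this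
    exact (abs_eq zero_le_one).2 (mul_self_eq_one_iff.1 this)
  · rcases eq_or_ne m (s.max' hs) with rfl | hm
    · rw [Pi.single_eq_same]
    · rw [Pi.single_eq_of_ne hm, hsupp m (hs_eq ▸ Finset.notMem_singleton.2 hm)]

end LinearOrder

theorem scalar_fir_parseval_iff_shift_general
    (d : ℕ) (h : (Fin d → ℤ) → ℝ)
    (hfin : (Function.support h).Finite) :
    ((∀ x : lp (fun _ : Fin d → ℤ => ℝ) 2,
        ∃ u : lp (fun _ : Fin d → ℤ => ℝ) 2,
          (∀ k : Fin d → ℤ, u k = ∑' m : Fin d → ℤ, h m * x (k - m)) ∧ ‖u‖ = ‖x‖) ↔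
      (∃ (k₀ : Fin d → ℤ) (ε : ℝ), (ε = 1 ∨ ε = -1) ∧
        ∀ k : Fin d → ℤ, h k = if k = k₀ then ε else 0)) ∧
    ((∀ x : lp (fun _ : Fin d → ℤ => ℝ) 2,
        ∃ u : lp (fun _ : Fin d → ℤ => ℝ) 2,
          (∀ k : Fin d → ℤ, u k = ∑' m : Fin d → ℤ, h m * x (k - m)) ∧ ‖u‖ = ‖x‖) ↔
      (∀ k : Fin d → ℤ,
        ∑' m : Fin d → ℤ, h m * h (m + k) = if k = 0 then 1 else 0)) := by
  have hsingle : (∃ (k₀ : Fin d → ℤ) (ε : ℝ), (ε = 1 ∨ ε = -1) ∧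
      ∀ k, h k = if k = k₀ then ε else 0) ↔ ∃ k₀ ε, |ε| = 1 ∧ h = Pi.single k₀ ε := by
    simp only [abs_eq zero_le_one, funext_iff, Pi.single_apply]
  have hshift : (∃ k₀ ε, |ε| = 1 ∧ h = Pi.single k₀ ε) → IsConvolutionIsometry h := by
    rintro ⟨k₀, ε, hε, rfl⟩
    exact isConvolutionIsometry_single k₀ hε
  have hcorr : (∀ k, ∑' m, h m * h (m + k) = if k = 0 then 1 else 0) →
      ∃ k₀ ε, |ε| = 1 ∧ h = Pi.single k₀ ε :=
    exists_eq_single_of_tsum_mul_add (G := Lex (Fin d → ℤ)) hfin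
  rw [hsingle]
  exact ⟨⟨fun hT => hcorr (IsConvolutionIsometry.tsum_mul_add hT), hshift⟩,
    ⟨IsConvolutionIsometry.tsum_mul_add, fun hc => hshift (hcorr hc)⟩⟩

/-- Let `h : ℤ^d → ℝ` be finitely supported (an FIR filter). Then the
convolution operator `T_h : ℓ₂(ℤ^d) → ℓ₂(ℤ^d)`, `x ↦ h ∗ x`, is an isometry —
equivalently, `∑_m h[m] h[m+k] = δ[k]` for all `k` — if and only if there exist
`k₀ ∈ ℤ^d` and a sign `ε ∈ {+1, −1}` such that `h = ε δ[·−k₀]`; i.e. the only scalar FIR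
Parseval filters are `T_h = ± S^{k₀}`. -/
theorem scalar_fir_parseval_iff_shift
    (d : ℕ) (hd : 0 < d) (h : (Fin d → ℤ) → ℝ)
    (hfin : (Function.support h).Finite) :
    ((∀ x : lp (fun _ : Fin d → ℤ => ℝ) 2,
        ∃ u : lp (fun _ : Fin d → ℤ => ℝ) 2,
          (∀ k : Fin d → ℤ, u k = ∑' m : Fin d → ℤ, h m * x (k - m)) ∧ ‖u‖ = ‖x‖) ↔
      (∃ (k₀ : Fin d → ℤ) (ε : ℝ), (ε = 1 ∨ ε = -1) ∧
        ∀ k : Fin d → ℤ, h k = if k = k₀ then ε else 0)) ∧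
    ((∀ x : lp (fun _ : Fin d → ℤ => ℝ) 2,
        ∃ u : lp (fun _ : Fin d → ℤ => ℝ) 2,
          (∀ k : Fin d → ℤ, u k = ∑' m : Fin d → ℤ, h m * x (k - m)) ∧ ‖u‖ = ‖x‖) ↔
      (∀ k : Fin d → ℤ,
        ∑' m : Fin d → ℤ, h m * h (m + k) = if k = 0 then 1 else 0)) :=
  scalar_fir_parseval_iff_shift_general d h hfin
end

section
/- Let d, N, p be positive integers, let U ∈ ℝ^{pN×pN} be an orthogonal matrix partitioned columnwise as U = [U₁ ⋯ U_p] with blocks U_i ∈ ℝ^{pN×N}, and let k₁, …, k_p ∈ ℤ^d. Define the matrix-valued filter H : ℤ^d → ℝ^{pN×N} by H[·] = (1/√p) ∑_{i=1}^{p} U_i δ[·−k_i]. Then (H^{T∨} ∗ H)[k] = ∑_{m∈ℤ^d} H[m]ᵀ H[m+k] = I_N δ[k] for all k ∈ ℤ^d, and consequently the convolution operator T_H : ℓ₂^N(ℤ^d) → ℓ₂^{pN}(ℤ^d), x ↦ H ∗ x, is an isometry. -/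
/-!
Every tap of `H` is a block `U_i / √p` of the orthogonal matrix `U`, placed at `κ i`. Since the
blocks have orthonormal columns and are mutually orthogonal, `U_iᵀ H[m] = δ[m - κ i] I / √p`,
and summing over the `p` taps gives the autocorrelation `I δ[k]`. For the isometry,
`(H ∗ x)[k] = U y_k / √p` where `y_k` stacks the shifted copies `x[k - κ i]`; `U` preserves the
norm of `y_k`, so `‖(H ∗ x)[k]‖² = p⁻¹ ∑ᵢ ‖x[k - κ i]‖²`, and summing over `k` each shift
contributes `‖x‖²`.
-/

open Matrix

theorem Matrix.norm_toEuclideanCLM_of_transpose_mul_self {n : Type*} [Fintype n] [DecidableEq n]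
    {U : Matrix n n ℝ} (hU : Uᵀ * U = 1) (y : EuclideanSpace ℝ n) :
    ‖toEuclideanCLM (𝕜 := ℝ) U y‖ = ‖y‖ := by
  have hunit : U ∈ unitaryGroup n ℝ := by
    rwa [mem_unitaryGroup_iff', star_eq_conjTranspose, conjTranspose_eq_transpose_of_trivial]
  exact ContinuousLinearMap.norm_map_of_mem_unitary (Unitary.map_mem toEuclideanCLM hunit) y

theorem lp.hasSum_norm_sq {α : Type*} {E : α → Type*} [∀ i, NormedAddCommGroup (E i)]
    (f : lp E 2) : HasSum (fun i => ‖f i‖ ^ 2) (‖f‖ ^ 2) := by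
  simpa using lp.hasSum_norm (p := 2) (by norm_num) f

theorem lp.exists_coe_eq_of_hasSum_norm_sq {α : Type*} {E : α → Type*}
    [∀ i, NormedAddCommGroup (E i)] {v : ∀ i, E i} {c : ℝ} (hc : 0 ≤ c)
    (hv : HasSum (fun i => ‖v i‖ ^ 2) (c ^ 2)) : ∃ u : lp E 2, ⇑u = v ∧ ‖u‖ = c := by
  have hmem : Memℓp v 2 := (memℓp_gen_iff (by norm_num)).mpr (by simpa using hv.summable)
  refine ⟨⟨v, hmem⟩, rfl, ?_⟩
  have hsq : ‖(⟨v, hmem⟩ : lp E 2)‖ ^ 2 = c ^ 2 := (lp.hasSum_norm_sq _).unique hv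
  exact (pow_left_inj₀ (norm_nonneg _) hc two_ne_zero).mp hsq

noncomputable section

def matConv {G κ ι : Type*} [Sub G] [Fintype ι] (H : G → Matrix κ ι ℝ)
    (x : G → EuclideanSpace ℝ ι) (k : G) : EuclideanSpace ℝ κ :=
  WithLp.toLp 2 fun r => ∑' m, ∑ n, H m r n * x (k - m) n

/-- `H[·] = (1/√p) ∑ᵢ Uᵢ δ[· - κ i]`, the block `Uᵢ` being the columns `(i, ·)` of `U`. -/
def polyphaseFilter {G ι : Type*} [DecidableEq G] {p : ℕ}
    (U : Matrix (Fin p × ι) (Fin p × ι) ℝ) (κ : Fin p → G) : G → Matrix (Fin p × ι) ι ℝ :=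
  fun k r n => (Real.sqrt p)⁻¹ * ∑ i : Fin p, if k = κ i then U r (i, n) else 0

def polyphaseStack {G ι : Type*} [Sub G] {p : ℕ} (κ : Fin p → G)
    (x : G → EuclideanSpace ℝ ι) (k : G) : EuclideanSpace ℝ (Fin p × ι) :=
  WithLp.toLp 2 fun q => x (k - κ q.1) q.2

end

section

variable {G ι : Type*} [DecidableEq G] {p : ℕ} {U : Matrix (Fin p × ι) (Fin p × ι) ℝ}
  {κ : Fin p → G}

theorem hasSum_polyphaseFilter_mul (g : G → ℝ) (r : Fin p × ι) (n : ι) :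
    HasSum (fun m => polyphaseFilter U κ m r n * g m)
      ((Real.sqrt p)⁻¹ * ∑ i, U r (i, n) * g (κ i)) := by
  have hδ : (fun m => polyphaseFilter U κ m r n * g m) =
      fun m => (Real.sqrt p)⁻¹ * ∑ i, if m = κ i then U r (i, n) * g (κ i) else 0 := by
    funext m
    simp only [polyphaseFilter, mul_assoc, Finset.sum_mul]
    congr 1
    refine Finset.sum_congr rfl fun i _ => ?_
    split_ifs with h <;> simp [h]
  rw [hδ]
  exact (hasSum_sum fun i _ => hasSum_ite_eq (κ i) _).mul_left _

variable [Fintype ι] [DecidableEq ι]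

theorem sum_mul_polyphaseFilter (hU : Uᵀ * U = 1) (i : Fin p) (n n' : ι) (m : G) :
    ∑ r, U r (i, n) * polyphaseFilter U κ m r n' =
      (Real.sqrt p)⁻¹ * if m = κ i ∧ n = n' then 1 else 0 := by
  have hcol : ∀ q q', ∑ r, U r q * U r q' = (1 : Matrix (Fin p × ι) (Fin p × ι) ℝ) q q' := by
    intro q q'
    rw [← hU, mul_apply]
    rfl
  calc ∑ r, U r (i, n) * polyphaseFilter U κ m r n'
      = (Real.sqrt p)⁻¹ * ∑ j, if m = κ j then ∑ r, U r (i, n) * U r (j, n') else 0 := by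
        simp only [polyphaseFilter, Finset.mul_sum, mul_ite, mul_zero]
        rw [Finset.sum_comm]
        refine Finset.sum_congr rfl fun j _ => ?_
        split_ifs <;> simp [mul_left_comm]
    _ = _ := by
        simp only [hcol, one_apply, Prod.mk.injEq]
        congr 1
        by_cases hn : n = n' <;> simp only [hn, and_true, and_false, ite_false, ite_self,
          Finset.sum_const_zero]
        rw [Fintype.sum_eq_single i fun j hj => by simp [Ne.symm hj]]
        simp

variable [AddGroup G]

theorem hasSum_polyphaseFilter_autocorrelation (hU : Uᵀ * U = 1) (hp : 0 < p) (k : G)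
    (n n' : ι) :
    HasSum (fun m => ((polyphaseFilter U κ m)ᵀ * polyphaseFilter U κ (m + k)) n n')
      (if k = 0 then (1 : Matrix ι ι ℝ) n n' else 0) := by
  simp only [mul_apply, transpose_apply]
  convert hasSum_sum fun r _ =>
    hasSum_polyphaseFilter_mul (U := U) (κ := κ) (fun m => polyphaseFilter U κ (m + k) r n') r n
    using 1
  symm
  calc ∑ r, (Real.sqrt p)⁻¹ * ∑ i, U r (i, n) * polyphaseFilter U κ (κ i + k) r n'
      = (Real.sqrt p)⁻¹ * ∑ i, ∑ r, U r (i, n) * polyphaseFilter U κ (κ i + k) r n' := by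
        rw [← Finset.mul_sum, Finset.sum_comm]
    _ = (p : ℝ)⁻¹ * ∑ _i : Fin p, if k = 0 ∧ n = n' then 1 else 0 := by
        simp only [sum_mul_polyphaseFilter hU, add_eq_left]
        rw [← Finset.mul_sum, ← mul_assoc, ← mul_inv, Real.mul_self_sqrt (Nat.cast_nonneg p)]
    _ = if k = 0 then (1 : Matrix ι ι ℝ) n n' else 0 := by
        have hp' : (p : ℝ) ≠ 0 := Nat.cast_ne_zero.mpr hp.ne'
        by_cases hk : k = 0 <;> by_cases hn : n = n' <;> simp [hk, hn, one_apply, hp']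

theorem norm_sq_matConv_polyphaseFilter (hU : Uᵀ * U = 1) (x : G → EuclideanSpace ℝ ι) (k : G) :
    ‖matConv (polyphaseFilter U κ) x k‖ ^ 2 = (p : ℝ)⁻¹ * ∑ i, ‖x (k - κ i)‖ ^ 2 := by
  have hconv : matConv (polyphaseFilter U κ) x k =
      (Real.sqrt p)⁻¹ • toEuclideanCLM (𝕜 := ℝ) U (polyphaseStack κ x k) := by
    ext r
    simp only [matConv, WithLp.ofLp_toLp]
    rw [(hasSum_sum fun n _ =>
      hasSum_polyphaseFilter_mul (U := U) (κ := κ) (fun m => x (k - m) n) r n).tsum_eq]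
    simp only [Finset.mul_sum, polyphaseStack, toEuclideanCLM_toLp, PiLp.smul_apply, mulVec,
      dotProduct, Fintype.sum_prod_type, smul_eq_mul]
    exact Finset.sum_comm
  have hstack : ‖polyphaseStack κ x k‖ ^ 2 = ∑ i, ‖x (k - κ i)‖ ^ 2 := by
    simp only [EuclideanSpace.real_norm_sq_eq, polyphaseStack, Fintype.sum_prod_type]
  rw [hconv, norm_smul, mul_pow, Matrix.norm_toEuclideanCLM_of_transpose_mul_self hU, hstack,
    norm_inv, Real.norm_eq_abs, abs_of_nonneg (Real.sqrt_nonneg _), inv_pow,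
    Real.sq_sqrt (Nat.cast_nonneg p)]

theorem hasSum_norm_sq_matConv_polyphaseFilter (hU : Uᵀ * U = 1) (hp : 0 < p)
    (x : lp (fun _ : G => EuclideanSpace ℝ ι) 2) :
    HasSum (fun k => ‖matConv (polyphaseFilter U κ) x k‖ ^ 2) (‖x‖ ^ 2) := by
  have hshift : ∀ i, HasSum (fun k => ‖x (k - κ i)‖ ^ 2) (‖x‖ ^ 2) := fun i =>
    (Equiv.subRight (κ i)).hasSum_iff.mpr (lp.hasSum_norm_sq x)
  have hp' : (p : ℝ) ≠ 0 := Nat.cast_ne_zero.mpr hp.ne'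
  rw [show ‖x‖ ^ 2 = (p : ℝ)⁻¹ * ∑ _i : Fin p, ‖x‖ ^ 2 by simp [hp']]
  simp only [norm_sq_matConv_polyphaseFilter hU]
  exact (hasSum_sum fun i _ => hshift i).mul_left _

end

theorem parseval_N_to_pN_module_general
    (d N p : ℕ) (hp : 0 < p)
    (U : Matrix (Fin p × Fin N) (Fin p × Fin N) ℝ)
    (hU : Uᵀ * U = 1)
    (κ : Fin p → (Fin d → ℤ))
    (H : (Fin d → ℤ) → Matrix (Fin p × Fin N) (Fin N) ℝ)
    (hH : ∀ (k : Fin d → ℤ) (r : Fin p × Fin N) (n : Fin N),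
      H k r n = (Real.sqrt p)⁻¹ * ∑ i : Fin p, if k = κ i then U r (i, n) else 0) :
    (∀ (k : Fin d → ℤ) (n n' : Fin N),
      ∑' m : Fin d → ℤ, ((H m)ᵀ * H (m + k)) n n' =
        if k = 0 then (1 : Matrix (Fin N) (Fin N) ℝ) n n' else 0) ∧
    (∀ x : lp (fun _ : Fin d → ℤ => EuclideanSpace ℝ (Fin N)) 2,
      ∃ u : lp (fun _ : Fin d → ℤ => EuclideanSpace ℝ (Fin p × Fin N)) 2,
        (∀ (k : Fin d → ℤ) (r : Fin p × Fin N),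
          u k r = ∑' m : Fin d → ℤ, ∑ n : Fin N, H m r n * x (k - m) n) ∧
        ‖u‖ = ‖x‖) := by
  obtain rfl : H = polyphaseFilter U κ := funext fun k => Matrix.ext (hH k)
  refine ⟨fun k n n' => (hasSum_polyphaseFilter_autocorrelation hU hp k n n').tsum_eq,
    fun x => ?_⟩
  obtain ⟨u, hu, hnorm⟩ := lp.exists_coe_eq_of_hasSum_norm_sq (norm_nonneg x)
    (hasSum_norm_sq_matConv_polyphaseFilter hU hp x)
  exact ⟨u, fun k r => by rw [hu]; rfl, hnorm⟩

/-- Let `U ∈ ℝ^{pN×pN}` be an orthogonal matrix partitioned columnwise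
into blocks `U_i ∈ ℝ^{pN×N}` (here indexed by `Fin p × Fin N`, the block `U_i` consisting
of the columns `(i, ·)`), and let `k₁, …, k_p ∈ ℤ^d`. Define
`H[·] = (1/√p) ∑_i U_i δ[·−k_i]`. Then `(H^{T∨} ∗ H)[k] = I_N δ[k]` for all `k`, and
consequently the convolution operator `T_H : ℓ₂^N(ℤ^d) → ℓ₂^{pN}(ℤ^d)` is an isometry. -/
theorem parseval_N_to_pN_module
    (d N p : ℕ) (hd : 0 < d) (hN : 0 < N) (hp : 0 < p)
    (U : Matrix (Fin p × Fin N) (Fin p × Fin N) ℝ)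
    (hU : Uᵀ * U = 1)
    (κ : Fin p → (Fin d → ℤ))
    (H : (Fin d → ℤ) → Matrix (Fin p × Fin N) (Fin N) ℝ)
    (hH : ∀ (k : Fin d → ℤ) (r : Fin p × Fin N) (n : Fin N),
      H k r n = (Real.sqrt p)⁻¹ * ∑ i : Fin p, if k = κ i then U r (i, n) else 0) :
    (∀ (k : Fin d → ℤ) (n n' : Fin N),
      ∑' m : Fin d → ℤ, ((H m)ᵀ * H (m + k)) n n' =
        if k = 0 then (1 : Matrix (Fin N) (Fin N) ℝ) n n' else 0) ∧
    (∀ x : lp (fun _ : Fin d → ℤ => EuclideanSpace ℝ (Fin N)) 2,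
      ∃ u : lp (fun _ : Fin d → ℤ => EuclideanSpace ℝ (Fin p × Fin N)) 2,
        (∀ (k : Fin d → ℤ) (r : Fin p × Fin N),
          u k r = ∑' m : Fin d → ℤ, ∑ n : Fin N, H m r n * x (k - m) n) ∧
        ‖u‖ = ‖x‖) :=
  parseval_N_to_pN_module_general d N p hp U hU κ H hH
end

section
/- Let A ∈ ℝ^{M×K}, let α > 0, let R : ℝ^K → ℝ^K be 1-Lipschitz, let β ∈ (0, 1/2], and define the averaged denoiser D = βR + (1−β)Id. For measurements y₁, y₂ ∈ ℝ^M, suppose s₁*, s₂* ∈ ℝ^K are fixed points of the plug-and-play forward-backward iteration with quadratic data term J(y, As) = (1/2)‖y − As‖₂², i.e. sᵢ* = D{sᵢ* − α Aᵀ(A sᵢ* − yᵢ)} for i = 1, 2. Then ‖A s₁* − A s₂*‖ ≤ ‖y₁ − y₂‖. -/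
/-!
For `β ≤ 1/2` the reflection `2D - Id = 2βR + (1 - 2β)Id` is a convex combination of
nonexpansive maps, so `D` is firmly nonexpansive: `‖Dx - Dy‖² ≤ ⟪Dx - Dy, x - y⟫`.
Applied at the two fixed points `sᵢ = D zᵢ`, where `z₁ - z₂ = u - α Aᵀ(Au - v)` with
`u = s₁ - s₂` and `v = y₁ - y₂`, this gives `⟪Au, Au - v⟫ ≤ 0`, i.e. `‖Au‖² ≤ ⟪Au, v⟫`,
and Cauchy–Schwarz finishes.
-/

open Matrix
open scoped RealInnerProductSpace

section FirmlyNonexpansive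

variable {E F : Type*} [NormedAddCommGroup E] [InnerProductSpace ℝ E]
  [NormedAddCommGroup F] [InnerProductSpace ℝ F]

def FirmlyNonexpansive (D : E → E) : Prop :=
  ∀ x y, ‖D x - D y‖ ^ 2 ≤ ⟪D x - D y, x - y⟫

theorem norm_convexCombination_id_sub_le {V : Type*} [SeminormedAddCommGroup V]
    [NormedSpace ℝ V] {R : V → V} (hR : ∀ x y, ‖R x - R y‖ ≤ ‖x - y‖)
    {θ : ℝ} (hθ₀ : 0 ≤ θ) (hθ₁ : θ ≤ 1) (x y : V) :
    ‖(θ • R x + (1 - θ) • x) - (θ • R y + (1 - θ) • y)‖ ≤ ‖x - y‖ := by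
  have hsplit : (θ • R x + (1 - θ) • x) - (θ • R y + (1 - θ) • y)
      = θ • (R x - R y) + (1 - θ) • (x - y) := by module
  calc ‖(θ • R x + (1 - θ) • x) - (θ • R y + (1 - θ) • y)‖
      ≤ θ * ‖R x - R y‖ + (1 - θ) * ‖x - y‖ := by
        rw [hsplit]
        refine (norm_add_le _ _).trans_eq ?_
        rw [norm_smul_of_nonneg hθ₀, norm_smul_of_nonneg (sub_nonneg.2 hθ₁)]
    _ ≤ θ * ‖x - y‖ + (1 - θ) * ‖x - y‖ := by gcongr; exact hR x y
    _ = ‖x - y‖ := by ring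

theorem norm_sq_le_inner_of_norm_two_smul_sub_le {a b : E} (h : ‖(2 : ℝ) • a - b‖ ≤ ‖b‖) :
    ‖a‖ ^ 2 ≤ ⟪a, b⟫ := by
  have hsq : ‖(2 : ℝ) • a - b‖ ^ 2 ≤ ‖b‖ ^ 2 := pow_le_pow_left₀ (norm_nonneg _) h 2
  rw [norm_sub_sq_real, norm_smul, real_inner_smul_left, Real.norm_two] at hsq
  nlinarith

theorem firmlyNonexpansive_of_averaged {R D : E → E} (hR : ∀ x y, ‖R x - R y‖ ≤ ‖x - y‖)
    {β : ℝ} (hβ₀ : 0 ≤ β) (hβ₁ : β ≤ 1 / 2) (hD : ∀ z, D z = β • R z + (1 - β) • z) :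
    FirmlyNonexpansive D := by
  intro x y
  apply norm_sq_le_inner_of_norm_two_smul_sub_le
  have hreflect : (2 : ℝ) • (D x - D y) - (x - y)
      = ((2 * β) • R x + (1 - 2 * β) • x) - ((2 * β) • R y + (1 - 2 * β) • y) := by
    rw [hD, hD]; module
  rw [hreflect]
  exact norm_convexCombination_id_sub_le hR (by linarith) (by linarith) x y

theorem norm_le_of_norm_sq_le_inner {a b : F} (h : ‖a‖ ^ 2 ≤ ⟪a, b⟫) : ‖a‖ ≤ ‖b‖ := by
  rcases (norm_nonneg a).eq_or_lt with ha | ha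
  · exact ha ▸ norm_nonneg b
  · nlinarith [real_inner_le_norm a b]

theorem norm_map_sub_le_of_forwardBackward_fixedPoint [FiniteDimensional ℝ E]
    [FiniteDimensional ℝ F] {D : E → E} (hD : FirmlyNonexpansive D) (A : E →ₗ[ℝ] F)
    {α : ℝ} (hα : 0 < α) {y₁ y₂ : F} {s₁ s₂ : E}
    (hs₁ : s₁ = D (s₁ - α • A.adjoint (A s₁ - y₁)))
    (hs₂ : s₂ = D (s₂ - α • A.adjoint (A s₂ - y₂))) :
    ‖A s₁ - A s₂‖ ≤ ‖y₁ - y₂‖ := by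
  have hfirm := hD (s₁ - α • A.adjoint (A s₁ - y₁)) (s₂ - α • A.adjoint (A s₂ - y₂))
  rw [← hs₁, ← hs₂] at hfirm
  have hdiff : (s₁ - α • A.adjoint (A s₁ - y₁)) - (s₂ - α • A.adjoint (A s₂ - y₂))
      = (s₁ - s₂) - α • A.adjoint ((A s₁ - A s₂) - (y₁ - y₂)) := by
    simp only [map_sub]; module
  rw [hdiff, inner_sub_right, real_inner_self_eq_norm_sq, real_inner_smul_right,
    LinearMap.adjoint_inner_right, map_sub] at hfirm
  have hcorr : ⟪A s₁ - A s₂, (A s₁ - A s₂) - (y₁ - y₂)⟫ ≤ 0 :=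
    nonpos_of_mul_nonpos_right (by linarith) hα
  rw [inner_sub_right, real_inner_self_eq_norm_sq] at hcorr
  exact norm_le_of_norm_sq_le_inner (by linarith)

end FirmlyNonexpansive

theorem pnp_fbs_measurement_consistency_general
    (M K : ℕ)
    (A : Matrix (Fin M) (Fin K) ℝ) (α : ℝ) (hα : 0 < α)
    (R : EuclideanSpace ℝ (Fin K) → EuclideanSpace ℝ (Fin K))
    (hR : ∀ z₁ z₂ : EuclideanSpace ℝ (Fin K), ‖R z₁ - R z₂‖ ≤ ‖z₁ - z₂‖)
    (β : ℝ) (hβ₀ : 0 < β) (hβ₁ : β ≤ 1 / 2)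
    (D : EuclideanSpace ℝ (Fin K) → EuclideanSpace ℝ (Fin K))
    (hD : ∀ z : EuclideanSpace ℝ (Fin K), D z = β • R z + (1 - β) • z)
    (y₁ y₂ : EuclideanSpace ℝ (Fin M))
    (s₁ s₂ : EuclideanSpace ℝ (Fin K))
    (hs₁ : s₁ = D (s₁ - α • Matrix.toEuclideanLin Aᵀ (Matrix.toEuclideanLin A s₁ - y₁)))
    (hs₂ : s₂ = D (s₂ - α • Matrix.toEuclideanLin Aᵀ (Matrix.toEuclideanLin A s₂ - y₂))) :
    ‖Matrix.toEuclideanLin A s₁ - Matrix.toEuclideanLin A s₂‖ ≤ ‖y₁ - y₂‖ := by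
  have hadjoint : Matrix.toEuclideanLin Aᵀ = (Matrix.toEuclideanLin A).adjoint := by
    rw [← Matrix.toEuclideanLin_conjTranspose_eq_adjoint, conjTranspose_eq_transpose_of_trivial]
  rw [hadjoint] at hs₁ hs₂
  exact norm_map_sub_le_of_forwardBackward_fixedPoint
    (firmlyNonexpansive_of_averaged hR hβ₀.le hβ₁ hD) _ hα hs₁ hs₂

/-- Let `A ∈ ℝ^{M×K}`, `α > 0`, `R : ℝ^K → ℝ^K` be 1-Lipschitz,
`β ∈ (0, 1/2]`, and `D = βR + (1−β)Id`. If `s₁*, s₂*` are fixed points of the PnP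
forward-backward iteration `sᵢ* = D{sᵢ* − α Aᵀ(A sᵢ* − yᵢ)}` for measurements `y₁, y₂`,
then `‖A s₁* − A s₂*‖ ≤ ‖y₁ − y₂‖`. -/
theorem pnp_fbs_measurement_consistency
    (M K : ℕ) (hM : 0 < M) (hK : 0 < K)
    (A : Matrix (Fin M) (Fin K) ℝ) (α : ℝ) (hα : 0 < α)
    (R : EuclideanSpace ℝ (Fin K) → EuclideanSpace ℝ (Fin K))
    (hR : ∀ z₁ z₂ : EuclideanSpace ℝ (Fin K), ‖R z₁ - R z₂‖ ≤ ‖z₁ - z₂‖)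
    (β : ℝ) (hβ₀ : 0 < β) (hβ₁ : β ≤ 1 / 2)
    (D : EuclideanSpace ℝ (Fin K) → EuclideanSpace ℝ (Fin K))
    (hD : ∀ z : EuclideanSpace ℝ (Fin K), D z = β • R z + (1 - β) • z)
    (y₁ y₂ : EuclideanSpace ℝ (Fin M))
    (s₁ s₂ : EuclideanSpace ℝ (Fin K))
    (hs₁ : s₁ = D (s₁ - α • Matrix.toEuclideanLin Aᵀ (Matrix.toEuclideanLin A s₁ - y₁)))
    (hs₂ : s₂ = D (s₂ - α • Matrix.toEuclideanLin Aᵀ (Matrix.toEuclideanLin A s₂ - y₂))) :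
    ‖Matrix.toEuclideanLin A s₁ - Matrix.toEuclideanLin A s₂‖ ≤ ‖y₁ - y₂‖ :=
  pnp_fbs_measurement_consistency_general M K A α hα R hR β hβ₀ hβ₁ D hD y₁ y₂ s₁ s₂ hs₁ hs₂
end

section
/- Let A ∈ ℝ^{M×K}, let 0 < α ≤ 2/‖AᵀA‖ (so that ‖I − αAᵀA‖ ≤ 1), and let D : ℝ^K → ℝ^K be L₀-Lipschitz with 0 < L₀ < 1. For measurements y₁, y₂ ∈ ℝ^M, suppose s₁*, s₂* ∈ ℝ^K are fixed points of the plug-and-play forward-backward iteration with quadratic data term, i.e. sᵢ* = D{sᵢ* − α Aᵀ(A sᵢ* − yᵢ)} for i = 1, 2. Then ‖s₁* − s₂*‖ ≤ (α ‖A‖ L₀ / (1 − L₀)) ‖y₁ − y₂‖, where ‖A‖ denotes the spectral (operator) norm of A. -/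
open Matrix

/-- The spectral (operator) norm of a real matrix with respect to the Euclidean norms. -/
noncomputable def matrixOpNorm {M K : ℕ} (A : Matrix (Fin M) (Fin K) ℝ) : ℝ :=
  ‖LinearMap.toContinuousLinearMap (Matrix.toEuclideanLin A)‖

/-! The fixed-point equation reads `s = D(P s + α Aᵀ y)` with `P = I - α AᵀA`. The step-size
condition `α ‖A‖² ≤ 2` makes `P` nonexpansive, so subtracting the equations for `y₁, y₂` and using
that `D` is an `L₀`-contraction gives `‖s₁ - s₂‖ ≤ L₀ (‖s₁ - s₂‖ + α ‖A‖ ‖y₁ - y₂‖)`, which is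
solved for `‖s₁ - s₂‖`. -/

theorem norm_sub_le_of_eq_apply_add {E : Type*} [SeminormedAddCommGroup E] {D P : E → E}
    {L : ℝ} (hL₀ : 0 ≤ L) (hL₁ : L < 1) (hD : ∀ z₁ z₂, ‖D z₁ - D z₂‖ ≤ L * ‖z₁ - z₂‖)
    (hP : ∀ x₁ x₂, ‖P x₁ - P x₂‖ ≤ ‖x₁ - x₂‖) {s₁ s₂ b₁ b₂ : E}
    (hs₁ : s₁ = D (P s₁ + b₁)) (hs₂ : s₂ = D (P s₂ + b₂)) :
    ‖s₁ - s₂‖ ≤ L / (1 - L) * ‖b₁ - b₂‖ := by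
  have hstep : ‖s₁ - s₂‖ ≤ L * (‖s₁ - s₂‖ + ‖b₁ - b₂‖) :=
    calc ‖s₁ - s₂‖ = ‖D (P s₁ + b₁) - D (P s₂ + b₂)‖ := by rw [← hs₁, ← hs₂]
      _ ≤ L * ‖(P s₁ + b₁) - (P s₂ + b₂)‖ := hD _ _
      _ = L * ‖(P s₁ - P s₂) + (b₁ - b₂)‖ := by rw [add_sub_add_comm]
      _ ≤ L * (‖s₁ - s₂‖ + ‖b₁ - b₂‖) := by
          gcongr; exact (norm_add_le _ _).trans (add_le_add_left (hP _ _) _)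
  rw [div_mul_eq_mul_div, le_div_iff₀ (by linarith)]
  linarith

section Adjoint

variable {E F : Type*} [NormedAddCommGroup E] [InnerProductSpace ℝ E] [CompleteSpace E]
  [NormedAddCommGroup F] [InnerProductSpace ℝ F] [CompleteSpace F]

open ContinuousLinearMap

theorem norm_sub_smul_adjoint_comp_self_apply_le (T : E →L[ℝ] F) {α : ℝ} (hα₀ : 0 ≤ α)
    (hα : α * ‖T‖ ^ 2 ≤ 2) (x : E) : ‖x - α • adjoint T (T x)‖ ≤ ‖x‖ := by
  have hinner : inner ℝ x (adjoint T (T x)) = ‖T x‖ ^ 2 := by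
    rw [adjoint_inner_right, real_inner_self_eq_norm_sq]
  have hnorm : ‖adjoint T (T x)‖ ≤ ‖T‖ * ‖T x‖ := by
    simpa only [LinearIsometryEquiv.norm_map] using le_opNorm (adjoint T) (T x)
  have hsq : α ^ 2 * ‖adjoint T (T x)‖ ^ 2 ≤ 2 * α * ‖T x‖ ^ 2 :=
    calc α ^ 2 * ‖adjoint T (T x)‖ ^ 2 ≤ α ^ 2 * (‖T‖ * ‖T x‖) ^ 2 := by gcongr
      _ = α * (α * ‖T‖ ^ 2) * ‖T x‖ ^ 2 := by ring
      _ ≤ α * 2 * ‖T x‖ ^ 2 := by gcongr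
      _ = 2 * α * ‖T x‖ ^ 2 := by ring
  -- `‖x - α T*T x‖² = ‖x‖² - 2α ‖T x‖² + α² ‖T*T x‖²`, and `hsq` bounds the last term.
  refine pow_le_pow_iff_left₀ (norm_nonneg _) (norm_nonneg _) two_ne_zero |>.mp ?_
  rw [norm_sub_sq_real, real_inner_smul_right, hinner, norm_smul, mul_pow, Real.norm_eq_abs,
    sq_abs]
  linarith

variable {D : E → E} {L α : ℝ} {s₁ s₂ : E} {y₁ y₂ : F}

theorem norm_sub_le_of_forwardBackward_fixedPoint (T : E →L[ℝ] F) (hα₀ : 0 ≤ α)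
    (hα : α * ‖T‖ ^ 2 ≤ 2) (hL₀ : 0 ≤ L) (hL₁ : L < 1)
    (hD : ∀ z₁ z₂, ‖D z₁ - D z₂‖ ≤ L * ‖z₁ - z₂‖)
    (hs₁ : s₁ = D (s₁ - α • adjoint T (T s₁ - y₁)))
    (hs₂ : s₂ = D (s₂ - α • adjoint T (T s₂ - y₂))) :
    ‖s₁ - s₂‖ ≤ α * ‖T‖ * L / (1 - L) * ‖y₁ - y₂‖ := by
  have hsplit (s : E) (y : F) :
      s - α • adjoint T (T s - y) = (s - α • adjoint T (T s)) + α • adjoint T y := by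
    rw [map_sub, smul_sub]
    abel
  have hP (x₁ x₂ : E) : ‖(x₁ - α • adjoint T (T x₁)) - (x₂ - α • adjoint T (T x₂))‖ ≤
      ‖x₁ - x₂‖ := by
    have := norm_sub_smul_adjoint_comp_self_apply_le T hα₀ hα (x₁ - x₂)
    rwa [map_sub, map_sub, smul_sub, sub_sub_sub_comm] at this
  have hb : ‖α • adjoint T y₁ - α • adjoint T y₂‖ ≤ α * ‖T‖ * ‖y₁ - y₂‖ := by
    rw [← smul_sub, ← map_sub, norm_smul, Real.norm_of_nonneg hα₀, mul_assoc]
    gcongr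
    exact (le_opNorm _ _).trans_eq (by rw [LinearIsometryEquiv.norm_map])
  calc ‖s₁ - s₂‖ ≤ L / (1 - L) * ‖α • adjoint T y₁ - α • adjoint T y₂‖ :=
        norm_sub_le_of_eq_apply_add hL₀ hL₁ hD hP (hs₁.trans (congrArg D (hsplit s₁ y₁)))
          (hs₂.trans (congrArg D (hsplit s₂ y₂)))
    _ ≤ L / (1 - L) * (α * ‖T‖ * ‖y₁ - y₂‖) :=
        mul_le_mul_of_nonneg_left hb (div_nonneg hL₀ (sub_nonneg.mpr hL₁.le))
    _ = α * ‖T‖ * L / (1 - L) * ‖y₁ - y₂‖ := by ring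

end Adjoint

theorem Matrix.toContinuousLinearMap_toEuclideanLin_transpose {m n : Type*} [Fintype m]
    [Fintype n] [DecidableEq m] [DecidableEq n] (A : Matrix m n ℝ) :
    LinearMap.toContinuousLinearMap (toEuclideanLin Aᵀ) =
      ContinuousLinearMap.adjoint (LinearMap.toContinuousLinearMap (toEuclideanLin A)) := by
  rw [← conjTranspose_eq_transpose_of_trivial, toEuclideanLin_conjTranspose_eq_adjoint,
    LinearMap.adjoint_toContinuousLinearMap]

theorem matrixOpNorm_transpose_mul_self {M K : ℕ} (A : Matrix (Fin M) (Fin K) ℝ) :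
    matrixOpNorm (Aᵀ * A) = matrixOpNorm A ^ 2 := by
  rw [matrixOpNorm, toLpLin_mul_same]
  change ‖LinearMap.toContinuousLinearMap (toEuclideanLin Aᵀ) ∘L
    LinearMap.toContinuousLinearMap (toEuclideanLin A)‖ = _
  rw [toContinuousLinearMap_toEuclideanLin_transpose, ContinuousLinearMap.norm_adjoint_comp_self,
    sq, matrixOpNorm]

theorem pnp_fbs_stability_general
    (M K : ℕ)
    (A : Matrix (Fin M) (Fin K) ℝ) (α : ℝ) (hα₀ : 0 < α)
    (hα₂ : α ≤ 2 / matrixOpNorm (Aᵀ * A))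
    (L₀ : ℝ) (hL₀ : 0 < L₀) (hL₁ : L₀ < 1)
    (D : EuclideanSpace ℝ (Fin K) → EuclideanSpace ℝ (Fin K))
    (hD : ∀ z₁ z₂ : EuclideanSpace ℝ (Fin K), ‖D z₁ - D z₂‖ ≤ L₀ * ‖z₁ - z₂‖)
    (y₁ y₂ : EuclideanSpace ℝ (Fin M))
    (s₁ s₂ : EuclideanSpace ℝ (Fin K))
    (hs₁ : s₁ = D (s₁ - α • Matrix.toEuclideanLin Aᵀ (Matrix.toEuclideanLin A s₁ - y₁)))
    (hs₂ : s₂ = D (s₂ - α • Matrix.toEuclideanLin Aᵀ (Matrix.toEuclideanLin A s₂ - y₂))) :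
    ‖s₁ - s₂‖ ≤ (α * matrixOpNorm A * L₀ / (1 - L₀)) * ‖y₁ - y₂‖ := by
  set T := LinearMap.toContinuousLinearMap (toEuclideanLin A)
  have hTt : ⇑(toEuclideanLin Aᵀ) = ContinuousLinearMap.adjoint T := by
    rw [← toContinuousLinearMap_toEuclideanLin_transpose]; rfl
  have hαT : α * ‖T‖ ^ 2 ≤ 2 := by
    rw [matrixOpNorm_transpose_mul_self] at hα₂
    exact mul_le_of_le_div₀ zero_le_two (sq_nonneg _) hα₂
  rw [hTt] at hs₁ hs₂
  exact norm_sub_le_of_forwardBackward_fixedPoint T hα₀.le hαT hL₀.le hL₁ hD hs₁ hs₂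

/-- Let `A ∈ ℝ^{M×K}`, `0 < α ≤ 2/‖AᵀA‖`, and let `D : ℝ^K → ℝ^K` be
`L₀`-Lipschitz with `0 < L₀ < 1`. If `s₁*, s₂*` are fixed points of the PnP
forward-backward iteration `sᵢ* = D{sᵢ* − α Aᵀ(A sᵢ* − yᵢ)}` for measurements `y₁, y₂`,
then `‖s₁* − s₂*‖ ≤ (α ‖A‖ L₀ / (1 − L₀)) ‖y₁ − y₂‖`. -/
theorem pnp_fbs_stability
    (M K : ℕ) (hM : 0 < M) (hK : 0 < K)
    (A : Matrix (Fin M) (Fin K) ℝ) (α : ℝ) (hα₀ : 0 < α)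
    (hα₂ : α ≤ 2 / matrixOpNorm (Aᵀ * A))
    (L₀ : ℝ) (hL₀ : 0 < L₀) (hL₁ : L₀ < 1)
    (D : EuclideanSpace ℝ (Fin K) → EuclideanSpace ℝ (Fin K))
    (hD : ∀ z₁ z₂ : EuclideanSpace ℝ (Fin K), ‖D z₁ - D z₂‖ ≤ L₀ * ‖z₁ - z₂‖)
    (y₁ y₂ : EuclideanSpace ℝ (Fin M))
    (s₁ s₂ : EuclideanSpace ℝ (Fin K))
    (hs₁ : s₁ = D (s₁ - α • Matrix.toEuclideanLin Aᵀ (Matrix.toEuclideanLin A s₁ - y₁)))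
    (hs₂ : s₂ = D (s₂ - α • Matrix.toEuclideanLin Aᵀ (Matrix.toEuclideanLin A s₂ - y₂))) :
    ‖s₁ - s₂‖ ≤ (α * matrixOpNorm A * L₀ / (1 - L₀)) * ‖y₁ - y₂‖ :=
  pnp_fbs_stability_general M K A α hα₀ hα₂ L₀ hL₀ hL₁ D hD y₁ y₂ s₁ s₂ hs₁ hs₂
end
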